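/- Let u_{k} = β g_k + (1−β)(u_{k−1} + g_k − w_k) where β ∈ (0,1), and suppose that conditioned on the past, E[g_k] = ∇J(x_k) and E[g_k − w_k] = ∇J(x_k) − ∇J(x_{k−1}). Define Δ_k = u_k − ∇J(x_k). Then E[Δ_k] = (1−β)·E[Δ_{k−1}], and consequently E[‖Δ_k‖²] ≤ (1−β)²E[‖Δ_{k−1}‖²] + 2β²E[‖g_k − ∇J(x_k)‖²] + 2(1−β)²E[‖g_k − w_k − ∇J(x_k) + ∇J(x_{k−1})‖²]. -/

import Mathlib

/-!
Write `Δ_k = (1 - β) Δ_{k-1} + ε_k` with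
`ε_k = β (g_k - ∇J(x_k)) + (1 - β) (g_k - w_k - ∇J(x_k) + ∇J(x_{k-1}))`.
Both brackets have zero conditional expectation given the past, so `ε_k` has mean zero and is
orthogonal in `L²` to the past-measurable term `(1 - β) Δ_{k-1}`. Hence the means satisfy the linear
recursion, the second moments add, and `‖a + b‖² ≤ 2‖a‖² + 2‖b‖²` bounds `E‖ε_k‖²`.
-/

open MeasureTheory

namespace MeasureTheory

variable {Ω : Type*} {m m0 : MeasurableSpace Ω} {μ : Measure Ω}

section NormedSpace

variable {E : Type*} [NormedAddCommGroup E] [NormedSpace ℝ E]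

lemma condExp_sub_ae_eq_zero_of_ae_eq [CompleteSpace E] (hm : m ≤ m0) [SigmaFinite (μ.trim hm)]
    {f F : Ω → E} (hf : Integrable f μ) (hFm : StronglyMeasurable[m] F) (hF : Integrable F μ)
    (h : μ[f|m] =ᵐ[μ] F) : μ[f - F|m] =ᵐ[μ] 0 := by
  filter_upwards [condExp_sub hf hF m, h] with ω hsub hω
  simp [hsub, hω, condExp_of_stronglyMeasurable hm hFm hF]

lemma condExp_smul_add_smul_ae_eq_zero [CompleteSpace E] {f g : Ω → E} (a b : ℝ)
    (hf : Integrable f μ) (hg : Integrable g μ) (hf0 : μ[f|m] =ᵐ[μ] 0) (hg0 : μ[g|m] =ᵐ[μ] 0) :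
    μ[a • f + b • g|m] =ᵐ[μ] 0 := by
  filter_upwards [condExp_add (hf.smul a) (hg.smul b) m, condExp_smul a f m, condExp_smul b g m,
    hf0, hg0] with ω hadd hsf hsg hf0 hg0
  simp [hadd, hsf, hsg, hf0, hg0]

lemma integral_eq_zero_of_condExp_ae_eq_zero [CompleteSpace E] (hm : m ≤ m0)
    [SigmaFinite (μ.trim hm)] {f : Ω → E} (h : μ[f|m] =ᵐ[μ] 0) : ∫ ω, f ω ∂μ = 0 := by
  rw [← integral_condExp hm, integral_congr_ae h, Pi.zero_def, integral_zero]

lemma integral_norm_smul_sq (c : ℝ) (f : Ω → E) :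
    ∫ ω, ‖c • f ω‖ ^ 2 ∂μ = c ^ 2 * ∫ ω, ‖f ω‖ ^ 2 ∂μ := by
  simp only [norm_smul, mul_pow, Real.norm_eq_abs, sq_abs, integral_const_mul]

lemma norm_smul_add_smul_sq_le (a b : ℝ) (x y : E) :
    ‖a • x + b • y‖ ^ 2 ≤ 2 * a ^ 2 * ‖x‖ ^ 2 + 2 * b ^ 2 * ‖y‖ ^ 2 :=
  calc ‖a • x + b • y‖ ^ 2 ≤ (‖a • x‖ + ‖b • y‖) ^ 2 := by gcongr; exact norm_add_le _ _
    _ ≤ 2 * (‖a • x‖ ^ 2 + ‖b • y‖ ^ 2) := add_sq_le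
    _ = 2 * a ^ 2 * ‖x‖ ^ 2 + 2 * b ^ 2 * ‖y‖ ^ 2 := by
      simp only [norm_smul, mul_pow, Real.norm_eq_abs, sq_abs]; ring

lemma integral_norm_smul_add_smul_sq_le {f g : Ω → E} (a b : ℝ) (hf : MemLp f 2 μ)
    (hg : MemLp g 2 μ) :
    ∫ ω, ‖a • f ω + b • g ω‖ ^ 2 ∂μ
      ≤ 2 * a ^ 2 * ∫ ω, ‖f ω‖ ^ 2 ∂μ + 2 * b ^ 2 * ∫ ω, ‖g ω‖ ^ 2 ∂μ := by
  have hf2 := hf.integrable_norm_pow two_ne_zero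
  have hg2 := hg.integrable_norm_pow two_ne_zero
  rw [← integral_const_mul, ← integral_const_mul,
    ← integral_add (hf2.const_mul _) (hg2.const_mul _)]
  exact integral_mono ((hf.const_smul a).add (hg.const_smul b) |>.integrable_norm_pow two_ne_zero)
    ((hf2.const_mul _).add (hg2.const_mul _)) fun ω => norm_smul_add_smul_sq_le a b (f ω) (g ω)

end NormedSpace

section InnerProductSpace

variable {H : Type*} [NormedAddCommGroup H] [InnerProductSpace ℝ H]

lemma MemLp.integrable_inner {f g : Ω → H} (hf : MemLp f 2 μ) (hg : MemLp g 2 μ) :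
    Integrable (fun ω => inner ℝ (f ω) (g ω)) μ :=
  memLp_one_iff_integrable.mp ((innerSL ℝ).memLp_of_bilin 1 hf hg)

lemma integral_inner_eq_zero_of_condExp_ae_eq_zero [CompleteSpace H] (hm : m ≤ m0)
    [SigmaFinite (μ.trim hm)] {f g : Ω → H} (hf : StronglyMeasurable[m] f)
    (hfg : Integrable (fun ω => inner ℝ (f ω) (g ω)) μ) (hg : Integrable g μ)
    (hg0 : μ[g|m] =ᵐ[μ] 0) : ∫ ω, inner ℝ (f ω) (g ω) ∂μ = 0 := by
  refine integral_eq_zero_of_condExp_ae_eq_zero hm ?_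
  filter_upwards [condExp_bilin_of_stronglyMeasurable_left (innerSL ℝ) hf hfg hg, hg0]
    with ω hpull hω
  refine hpull.trans ?_
  simp [hω]

lemma integral_norm_add_sq_of_condExp_ae_eq_zero [CompleteSpace H] [IsFiniteMeasure μ]
    (hm : m ≤ m0) {f g : Ω → H} (hfm : StronglyMeasurable[m] f) (hf : MemLp f 2 μ)
    (hg : MemLp g 2 μ) (hg0 : μ[g|m] =ᵐ[μ] 0) :
    ∫ ω, ‖f ω + g ω‖ ^ 2 ∂μ = ∫ ω, ‖f ω‖ ^ 2 ∂μ + ∫ ω, ‖g ω‖ ^ 2 ∂μ := by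
  have hfg := hf.integrable_inner hg
  have horth :=
    integral_inner_eq_zero_of_condExp_ae_eq_zero hm hfm hfg (hg.integrable one_le_two) hg0
  have hf2 := hf.integrable_norm_pow two_ne_zero
  have hf2fg : Integrable (fun ω => ‖f ω‖ ^ 2 + 2 * inner ℝ (f ω) (g ω)) μ :=
    hf2.add (hfg.const_mul 2)
  simp_rw [norm_add_sq_real]
  rw [integral_add hf2fg (hg.integrable_norm_pow two_ne_zero), integral_add hf2 (hfg.const_mul 2),
    integral_const_mul, horth, mul_zero, add_zero]

end InnerProductSpace

end MeasureTheory

theorem stmt16_general {Ω : Type*} {m0 : MeasurableSpace Ω} (μ : Measure Ω) [IsProbabilityMeasure μ]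
    {d : ℕ} (𝓕 : MeasurableSpace Ω) (h𝓕 : 𝓕 ≤ m0)
    (β : ℝ)
    (g w uprev G G' : Ω → EuclideanSpace ℝ (Fin d))
    (hg : MemLp g 2 μ) (hw : MemLp w 2 μ) (huprev : MemLp uprev 2 μ)
    (hG : MemLp G 2 μ) (hG' : MemLp G' 2 μ)
    (huprev_meas : StronglyMeasurable[𝓕] uprev)
    (hG_meas : StronglyMeasurable[𝓕] G) (hG'_meas : StronglyMeasurable[𝓕] G')
    (hcond1 : μ[g|𝓕] =ᵐ[μ] G)
    (hcond2 : μ[g - w|𝓕] =ᵐ[μ] (G - G')) :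
    (∫ ω, (β • g ω + (1 - β) • (uprev ω + g ω - w ω) - G ω) ∂μ
        = (1 - β) • ∫ ω, (uprev ω - G' ω) ∂μ) ∧
    (∫ ω, ‖β • g ω + (1 - β) • (uprev ω + g ω - w ω) - G ω‖ ^ 2 ∂μ
        ≤ (1 - β) ^ 2 * ∫ ω, ‖uprev ω - G' ω‖ ^ 2 ∂μ
          + 2 * β ^ 2 * ∫ ω, ‖g ω - G ω‖ ^ 2 ∂μ
          + 2 * (1 - β) ^ 2 * ∫ ω, ‖g ω - w ω - G ω + G' ω‖ ^ 2 ∂μ) := by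
  set ε := β • (g - G) + (1 - β) • (g - w - (G - G')) with hε
  have hdecomp : ∀ ω, β • g ω + (1 - β) • (uprev ω + g ω - w ω) - G ω
      = (1 - β) • (uprev ω - G' ω) + ε ω := fun ω => by
    simp only [hε, Pi.add_apply, Pi.smul_apply, Pi.sub_apply]; module
  have hcond_g := condExp_sub_ae_eq_zero_of_ae_eq h𝓕 (hg.integrable one_le_two) hG_meas
    (hG.integrable one_le_two) hcond1
  have hcond_gw := condExp_sub_ae_eq_zero_of_ae_eq h𝓕 ((hg.sub hw).integrable one_le_two)
    (hG_meas.sub hG'_meas) ((hG.sub hG').integrable one_le_two) hcond2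
  have hε0 : μ[ε|𝓕] =ᵐ[μ] 0 := condExp_smul_add_smul_ae_eq_zero β (1 - β)
    ((hg.sub hG).integrable one_le_two) (((hg.sub hw).sub (hG.sub hG')).integrable one_le_two)
    hcond_g hcond_gw
  have hεL2 : MemLp ε 2 μ :=
    ((hg.sub hG).const_smul β).add (((hg.sub hw).sub (hG.sub hG')).const_smul (1 - β))
  have hpast : MemLp (fun ω => (1 - β) • (uprev ω - G' ω)) 2 μ :=
    (huprev.sub hG').const_smul (1 - β)
  simp_rw [hdecomp]
  refine ⟨?_, ?_⟩
  · rw [integral_add (hpast.integrable one_le_two) (hεL2.integrable one_le_two),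
      integral_eq_zero_of_condExp_ae_eq_zero h𝓕 hε0, add_zero, integral_smul]
  · rw [integral_norm_add_sq_of_condExp_ae_eq_zero (f := fun ω => (1 - β) • (uprev ω - G' ω)) h𝓕
      ((huprev_meas.sub hG'_meas).const_smul (1 - β)) hpast hεL2 hε0, integral_norm_smul_sq,
      add_assoc]
    gcongr
    have hvar := integral_norm_smul_add_smul_sq_le (μ := μ) β (1 - β) (hg.sub hG)
      ((hg.sub hw).sub (hG.sub hG'))
    simp only [hε, Pi.add_apply, Pi.smul_apply, Pi.sub_apply, ← sub_add] at hvar ⊢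
    exact hvar

theorem stmt16 {Ω : Type*} {m0 : MeasurableSpace Ω} (μ : Measure Ω) [IsProbabilityMeasure μ]
    {d : ℕ} (𝓕 : MeasurableSpace Ω) (h𝓕 : 𝓕 ≤ m0)
    (β : ℝ) (hβ0 : 0 < β) (hβ1 : β < 1)
    (g w uprev G G' : Ω → EuclideanSpace ℝ (Fin d))
    (hg : MemLp g 2 μ) (hw : MemLp w 2 μ) (huprev : MemLp uprev 2 μ)
    (hG : MemLp G 2 μ) (hG' : MemLp G' 2 μ)
    (huprev_meas : StronglyMeasurable[𝓕] uprev)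
    (hG_meas : StronglyMeasurable[𝓕] G) (hG'_meas : StronglyMeasurable[𝓕] G')
    (hcond1 : μ[g|𝓕] =ᵐ[μ] G)
    (hcond2 : μ[g - w|𝓕] =ᵐ[μ] (G - G')) :
    (∫ ω, (β • g ω + (1 - β) • (uprev ω + g ω - w ω) - G ω) ∂μ
        = (1 - β) • ∫ ω, (uprev ω - G' ω) ∂μ) ∧
    (∫ ω, ‖β • g ω + (1 - β) • (uprev ω + g ω - w ω) - G ω‖ ^ 2 ∂μ
        ≤ (1 - β) ^ 2 * ∫ ω, ‖uprev ω - G' ω‖ ^ 2 ∂μ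
          + 2 * β ^ 2 * ∫ ω, ‖g ω - G ω‖ ^ 2 ∂μ
          + 2 * (1 - β) ^ 2 * ∫ ω, ‖g ω - w ω - G ω + G' ω‖ ^ 2 ∂μ) :=
  stmt16_general μ 𝓕 h𝓕 β g w uprev G G' hg hw huprev hG hG' huprev_meas hG_meas hG'_meas hcond1
    hcond2
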